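/- arXiv:1910.01924 — 3 statements merged into one kernel-verified Lean document; each statement's English description precedes it below -/
import Mathlib

section
/- Let I₂, I₃ > 0, let β : ℝ³ → ℝ³ be the linear map β(P₁,P₂,P₃) = (P₁/I₂, P₂/I₂, P₃/I₃), and let δ = (0,0,δ₃) with δ₃ ∈ ℝ. Then for every P ∈ ℝ³ and every g ∈ SO(3), the third components of P × β(P) and of (g⁻¹ eᵢ) × δ (for i = 1,2,3, where e₁,e₂,e₃ is the standard basis) are all zero. Consequently, along any solution t ↦ (g(t), P(t)) of the controlled rigid body equations ġ = g·A(βP), Ṗ = P × βP + Σᵢ uᵢ(t)(g⁻¹eᵢ) × δ with measurable bounded controls uᵢ, the quantity P₃(t) is constant. -/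
open Matrix

/-- The inertia map `β(P) = (P₁/I₂, P₂/I₂, P₃/I₃)`. -/
noncomputable def inertiaMap (I₂ I₃ : ℝ) (P : Fin 3 → ℝ) : Fin 3 → ℝ :=
  ![P 0 / I₂, P 1 / I₂, P 2 / I₃]

/-- The hat map sending `P ∈ ℝ³` to the skew-symmetric matrix `A(P)`. -/
noncomputable def hatMap (P : Fin 3 → ℝ) : Matrix (Fin 3) (Fin 3) ℝ :=
  !![0, -P 2, P 1; P 2, 0, -P 0; -P 1, P 0, 0]

/-
Both terms of the torque equation have vanishing third component: `(v × w)₃ = v₁w₂ - v₂w₁`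
is zero whenever the first two components of `w` are a multiple of those of `v`, which holds for
`w = βP` because `I₁ = I₂`, and for `w = δ` (multiple `0`) because `δ` lies on the symmetry axis.
Hence `Ṗ₃ = 0` identically, and `P₃` is constant by the mean value theorem.
-/

theorem cross_apply_two_eq_zero_of_proportional {v w : Fin 3 → ℝ} (c : ℝ)
    (h₀ : w 0 = c * v 0) (h₁ : w 1 = c * v 1) : (v ⨯₃ w) 2 = 0 := by
  simp only [cross_apply, h₀, h₁, Matrix.cons_val]
  ring

theorem cross_inertiaMap_apply_two (I₂ I₃ : ℝ) (P : Fin 3 → ℝ) :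
    (P ⨯₃ inertiaMap I₂ I₃ P) 2 = 0 :=
  cross_apply_two_eq_zero_of_proportional I₂⁻¹ (by simp [inertiaMap, div_eq_inv_mul])
    (by simp [inertiaMap, div_eq_inv_mul])

theorem cross_axial_apply_two (v : Fin 3 → ℝ) (δ₃ : ℝ) : (v ⨯₃ ![0, 0, δ₃]) 2 = 0 :=
  cross_apply_two_eq_zero_of_proportional 0 (by simp) (by simp)

theorem genuine_symmetric_top_P3_conserved_general
    (I₂ I₃ : ℝ) (δ₃ : ℝ) :
    let δ : Fin 3 → ℝ := ![0, 0, δ₃]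
    (∀ P : Fin 3 → ℝ, (P ⨯₃ inertiaMap I₂ I₃ P) 2 = 0) ∧
    (∀ g : Matrix (Fin 3) (Fin 3) ℝ, g ∈ Matrix.specialOrthogonalGroup (Fin 3) ℝ →
      ∀ i : Fin 3, ((g⁻¹ *ᵥ Pi.single i 1) ⨯₃ δ) 2 = 0) ∧
    (∀ (u : Fin 3 → ℝ → ℝ) (g : ℝ → Matrix (Fin 3) (Fin 3) ℝ) (P : ℝ → Fin 3 → ℝ),
      (∀ i, Measurable (u i)) → (∀ i, ∃ C, ∀ t, |u i t| ≤ C) →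
      (∀ t, g t ∈ Matrix.specialOrthogonalGroup (Fin 3) ℝ) →
      (∀ t i j, HasDerivAt (fun τ => g τ i j)
        ((g t * hatMap (inertiaMap I₂ I₃ (P t))) i j) t) →
      (∀ t i, HasDerivAt (fun τ => P τ i)
        ((P t ⨯₃ inertiaMap I₂ I₃ (P t)
          + ∑ l : Fin 3, u l t • (((g t)⁻¹ *ᵥ Pi.single l 1) ⨯₃ δ)) i) t) →
      ∀ t s : ℝ, P t 2 = P s 2) := by
  refine ⟨cross_inertiaMap_apply_two I₂ I₃, fun g _ i => cross_axial_apply_two _ δ₃, ?_⟩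
  intro u g P _ _ _ _ hP t s
  have hP₃ : ∀ τ, HasDerivAt (fun τ => P τ 2) 0 τ := fun τ => by
    simpa [cross_inertiaMap_apply_two, cross_axial_apply_two, Finset.sum_apply] using hP τ 2
  exact is_const_of_deriv_eq_zero (fun τ => (hP₃ τ).differentiableAt) (fun τ => (hP₃ τ).deriv) t s

/-- For a genuine symmetric top (`δ = (0,0,δ₃)`), the third components of `P × βP` and of
`(g⁻¹eᵢ) × δ` vanish, and consequently `P₃` is a conserved quantity of the controlled
Euler equations `ġ = g A(βP)`, `Ṗ = P × βP + Σᵢ uᵢ (g⁻¹eᵢ) × δ`. -/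
theorem genuine_symmetric_top_P3_conserved
    (I₂ I₃ : ℝ) (hI₂ : 0 < I₂) (hI₃ : 0 < I₃) (δ₃ : ℝ) :
    let δ : Fin 3 → ℝ := ![0, 0, δ₃]
    (∀ P : Fin 3 → ℝ, (P ⨯₃ inertiaMap I₂ I₃ P) 2 = 0) ∧
    (∀ g : Matrix (Fin 3) (Fin 3) ℝ, g ∈ Matrix.specialOrthogonalGroup (Fin 3) ℝ →
      ∀ i : Fin 3, ((g⁻¹ *ᵥ Pi.single i 1) ⨯₃ δ) 2 = 0) ∧
    (∀ (u : Fin 3 → ℝ → ℝ) (g : ℝ → Matrix (Fin 3) (Fin 3) ℝ) (P : ℝ → Fin 3 → ℝ),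
      (∀ i, Measurable (u i)) → (∀ i, ∃ C, ∀ t, |u i t| ≤ C) →
      (∀ t, g t ∈ Matrix.specialOrthogonalGroup (Fin 3) ℝ) →
      (∀ t i j, HasDerivAt (fun τ => g τ i j)
        ((g t * hatMap (inertiaMap I₂ I₃ (P t))) i j) t) →
      (∀ t i, HasDerivAt (fun τ => P τ i)
        ((P t ⨯₃ inertiaMap I₂ I₃ (P t)
          + ∑ l : Fin 3, u l t • (((g t)⁻¹ *ᵥ Pi.single l 1) ⨯₃ δ)) i) t) →
      ∀ t s : ℝ, P t 2 = P s 2) :=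
  genuine_symmetric_top_P3_conserved_general I₂ I₃ δ₃
end

section
/- Fix real numbers I₂, I₃ > 0 and define E(j,k) = j(j+1)/(2I₂) + (1/(2I₃) − 1/(2I₂))k² for integers j ≥ 0 and k ∈ ℤ. If I₂/I₃ is irrational and I₂ ≠ I₃, then any identity of the form |E(j+1,k+1) − E(j,k)| = |E(j'',s+h) − E(j',s)|, with j ≤ j' ≤ j'' ≤ j+1, −j' ≤ s ≤ j', and h ∈ {−1,0,1}, forces j' = j, j'' = j+1, s = ±k, and s+h = ±(k+1). -/
/-- The symmetric-top rotational energy levels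
`E(j,k) = j(j+1)/(2I₂) + (1/(2I₃) − 1/(2I₂))k²`. -/
noncomputable def energyLevel (I₂ I₃ : ℝ) (j : ℕ) (k : ℤ) : ℝ :=
  (j * (j + 1)) / (2 * I₂) + (1 / (2 * I₃) - 1 / (2 * I₂)) * (k : ℝ) ^ 2

/-- Key independence lemma: if `I₂/I₃` is irrational, a ℤ-linear relation
`m/(2I₂) + n(1/(2I₃) − 1/(2I₂)) = 0` forces `m = n = 0`. -/
lemma key_indep (I₂ I₃ : ℝ) (hI₂ : 0 < I₂) (hI₃ : 0 < I₃)
    (hirr : Irrational (I₂ / I₃)) (m n : ℤ)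
    (hrel : (1 / (2 * I₂)) * (m : ℝ) + (1 / (2 * I₃) - 1 / (2 * I₂)) * (n : ℝ) = 0) :
    m = 0 ∧ n = 0 := by
  have hI₂' : (2 : ℝ) * I₂ ≠ 0 := by positivity
  have hI₃' : (2 : ℝ) * I₃ ≠ 0 := by positivity
  have hmul : I₃ * (m : ℝ) + (I₂ - I₃) * (n : ℝ) = 0 := by
    field_simp at hrel
    nlinarith [hrel]
  by_cases hn : n = 0
  · subst hn
    constructor
    · have : I₃ * (m : ℝ) = 0 := by push_cast at hmul; linarith
      rcases mul_eq_zero.mp this with h | h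
      · exact absurd h hI₃.ne'
      · exact_mod_cast h
    · rfl
  · exfalso
    have hnR : (n : ℝ) ≠ 0 := Int.cast_ne_zero.mpr hn
    apply hirr
    refine ⟨((n - m : ℤ) : ℚ) / ((n : ℤ) : ℚ), ?_⟩
    have hI₃0 : I₃ ≠ 0 := hI₃.ne'
    push_cast
    rw [div_eq_div_iff hnR hI₃0]
    nlinarith [hmul]

/-- `λ`-resonances: if `I₂/I₃ ∉ ℚ` and `I₂ ≠ I₃`, an identity
`|E(j+1,k+1) − E(j,k)| = |E(j'',s+h) − E(j',s)|` with `j ≤ j' ≤ j'' ≤ j+1`,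
`−j' ≤ s ≤ j'`, `h ∈ {−1,0,1}` forces `j' = j`, `j'' = j+1`, `s = ±k`,
`s+h = ±(k+1)`. -/
theorem lambda_resonances
    (I₂ I₃ : ℝ) (hI₂ : 0 < I₂) (hI₃ : 0 < I₃) (hirr : Irrational (I₂ / I₃)) (hne : I₂ ≠ I₃)
    (j j' j'' : ℕ) (k s h : ℤ)
    (hk : -(j : ℤ) ≤ k ∧ k ≤ (j : ℤ))
    (hj : j ≤ j' ∧ j' ≤ j'' ∧ j'' ≤ j + 1)
    (hs : -(j' : ℤ) ≤ s ∧ s ≤ (j' : ℤ)) (hh : h = -1 ∨ h = 0 ∨ h = 1)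
    (heq : |energyLevel I₂ I₃ (j + 1) (k + 1) - energyLevel I₂ I₃ j k| =
      |energyLevel I₂ I₃ j'' (s + h) - energyLevel I₂ I₃ j' s|) :
    j' = j ∧ j'' = j + 1 ∧
      ((s = k ∧ s + h = k + 1) ∨ (s = -k ∧ s + h = -(k + 1))) := by
  have hI₂' : (2 : ℝ) * I₂ ≠ 0 := by positivity
  have hI₃' : (2 : ℝ) * I₃ ≠ 0 := by positivity
  -- D := j''(j''+1) - j'(j'+1) ≥ 0
  have hDnn : (j' : ℤ) * (j' + 1) ≤ (j'' : ℤ) * (j'' + 1) := by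
    have h1 : (j' : ℤ) ≤ j'' := by exact_mod_cast hj.2.1
    have h2 : (0 : ℤ) ≤ j' := Int.ofNat_nonneg j'
    nlinarith
  rcases abs_eq_abs.mp heq with hcase | hcase
  · -- E(j+1,k+1)-E(j,k) = E(j'',s+h)-E(j',s)
    have hzero : (1 / (2 * I₂)) * ((2 * ((j : ℤ) + 1) -
          ((j'' : ℤ) * (j'' + 1) - (j' : ℤ) * (j' + 1)) : ℤ) : ℝ) +
        (1 / (2 * I₃) - 1 / (2 * I₂)) * (((2 * k + 1) - h * (2 * s + h) : ℤ) : ℝ) = 0 := by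
      unfold energyLevel at hcase
      push_cast at hcase ⊢
      linear_combination hcase
    obtain ⟨hm, hn⟩ := key_indep I₂ I₃ hI₂ hI₃ hirr _ _ hzero
    -- From hm: j''(j''+1) - j'(j'+1) = 2(j+1)
    have hj'cases : (j' : ℤ) = j ∨ (j' : ℤ) = j + 1 := by omega
    have hj''cases : (j'' : ℤ) = j ∨ (j'' : ℤ) = j + 1 := by omega
    have hjnn : (0 : ℤ) ≤ j := Int.ofNat_nonneg j
    have hjj : j' = j ∧ j'' = j + 1 := by
      rcases hj'cases with h1 | h1 <;> rcases hj''cases with h2 | h2 <;>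
        rw [h1, h2] at hm
      · exfalso; nlinarith
      · constructor
        · exact_mod_cast h1
        · exact_mod_cast h2
      · exfalso
        have : (j'' : ℤ) < j' := by rw [h1, h2]; omega
        have : j'' < j' := by exact_mod_cast this
        omega
      · exfalso; nlinarith
    refine ⟨hjj.1, hjj.2, ?_⟩
    rcases hh with rfl | rfl | rfl
    · right; omega
    · exfalso; omega
    · left; omega
  · -- E(j+1,k+1)-E(j,k) = -(E(j'',s+h)-E(j',s)) : impossible
    exfalso
    have hzero : (1 / (2 * I₂)) * ((2 * ((j : ℤ) + 1) +
          ((j'' : ℤ) * (j'' + 1) - (j' : ℤ) * (j' + 1)) : ℤ) : ℝ) +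
        (1 / (2 * I₃) - 1 / (2 * I₂)) * (((2 * k + 1) + h * (2 * s + h) : ℤ) : ℝ) = 0 := by
      unfold energyLevel at hcase
      push_cast at hcase ⊢
      linear_combination hcase
    obtain ⟨hm, hn⟩ := key_indep I₂ I₃ hI₂ hI₃ hirr _ _ hzero
    have hjnn : (0 : ℤ) ≤ j := Int.ofNat_nonneg j
    nlinarith
end

section
/- Fix I₂, I₃ > 0 with I₂/I₃ irrational and define E(j,k) = j(j+1)/(2I₂) + (1/(2I₃) − 1/(2I₂))k². Then for any integers j, j', k, k', s, s' (with the gaps |E(j',s') − E(j',s)| of 'η-type', i.e. j fixed) the identity |E(j,k+1) − E(j,k)| = |E(j'',s+h) − E(j',s)| with j ≤ j' ≤ j'' ≤ j+1, −j' ≤ s ≤ j', h ∈ {−1,0,1} forces j' = j'' (both equal to j or to j+1) and s = ±k, s+h = ±(k+1). -/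
theorem Irrational.intCast_eq_zero_of_mul_add_mul_eq_zero {a b : ℝ} (hab : Irrational (b / a))
    {m n : ℤ} (h : a * m + b * n = 0) : m = 0 ∧ n = 0 := by
  have ha : a ≠ 0 := by
    rintro rfl
    simp at hab
  have hn : n = 0 := by
    by_contra hn
    apply hab.ne_rational (-m) n
    have hn' : (n : ℝ) ≠ 0 := Int.cast_ne_zero.mpr hn
    rw [Int.cast_neg, eq_div_iff hn', div_mul_eq_mul_div, div_eq_iff ha]
    linear_combination h
  subst hn
  simpa [ha] using h

theorem Irrational.intCast_eq_of_abs_mul_add_mul_eq {a b : ℝ} (hab : Irrational (b / a))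
    {m n m' n' : ℤ} (h : |a * m + b * n| = |a * m' + b * n'|) :
    (m = m' ∧ n = n') ∨ (m = -m' ∧ n = -n') := by
  rcases abs_eq_abs.mp h with h | h
  · have := hab.intCast_eq_zero_of_mul_add_mul_eq_zero (m := m - m') (n := n - n')
      (by push_cast; linear_combination h)
    exact Or.inl ⟨by omega, by omega⟩
  · have := hab.intCast_eq_zero_of_mul_add_mul_eq_zero (m := m + m') (n := n + n')
      (by push_cast; linear_combination h)
    exact Or.inr ⟨by omega, by omega⟩

theorem irrational_energyLevel_coeff_ratio {I₂ I₃ : ℝ} (hirr : Irrational (I₂ / I₃)) :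
    Irrational ((1 / (2 * I₃) - 1 / (2 * I₂)) / (1 / (2 * I₂))) := by
  have hI₂ : I₂ ≠ 0 := by
    rintro rfl
    simp at hirr
  have : (1 / (2 * I₃) - 1 / (2 * I₂)) / (1 / (2 * I₂)) = I₂ / I₃ - (1 : ℤ) := by
    field_simp
    ring
  rw [this]
  exact hirr.sub_intCast 1

theorem energyLevel_sub_energyLevel (I₂ I₃ : ℝ) (j₁ j₂ : ℕ) (k₁ k₂ : ℤ) :
    energyLevel I₂ I₃ j₂ k₂ - energyLevel I₂ I₃ j₁ k₁ =
      1 / (2 * I₂) * (((j₂ : ℤ) * (j₂ + 1) - j₁ * (j₁ + 1) : ℤ) : ℝ) +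
        (1 / (2 * I₃) - 1 / (2 * I₂)) * ((k₂ ^ 2 - k₁ ^ 2 : ℤ) : ℝ) := by
  simp only [energyLevel]
  push_cast
  ring

theorem Nat.eq_of_intCast_mul_add_one_eq {a b : ℕ} (h : (a : ℤ) * (a + 1) = b * (b + 1)) :
    a = b := by
  rcases lt_trichotomy a b with hab | hab | hab
  · have : (a : ℤ) + 1 ≤ b := by omega
    nlinarith
  · exact hab
  · have : (b : ℤ) + 1 ≤ a := by omega
    nlinarith

theorem Int.sq_add_sub_sq_eq_pm_odd_cases {k s h : ℤ} (hh : h = -1 ∨ h = 0 ∨ h = 1)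
    (hn : (s + h) ^ 2 - s ^ 2 = 2 * k + 1 ∨ (s + h) ^ 2 - s ^ 2 = -(2 * k + 1)) :
    (s = k ∧ s + h = k + 1) ∨ (s = -k ∧ s + h = -(k + 1)) ∨
      (s = k + 1 ∧ s + h = k) ∨ (s = -(k + 1) ∧ s + h = -k) := by
  rcases hh with rfl | rfl | rfl <;> ring_nf at hn <;> omega

theorem eta_resonances_general
    (I₂ I₃ : ℝ) (hirr : Irrational (I₂ / I₃))
    (j j' j'' : ℕ) (k s h : ℤ)
    (hj : j ≤ j' ∧ j' ≤ j'' ∧ j'' ≤ j + 1)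
    (hh : h = -1 ∨ h = 0 ∨ h = 1)
    (heq : |energyLevel I₂ I₃ j (k + 1) - energyLevel I₂ I₃ j k| =
      |energyLevel I₂ I₃ j'' (s + h) - energyLevel I₂ I₃ j' s|) :
    j' = j'' ∧ (j' = j ∨ j' = j + 1) ∧
      ((s = k ∧ s + h = k + 1) ∨ (s = -k ∧ s + h = -(k + 1)) ∨
       (s = k + 1 ∧ s + h = k) ∨ (s = -(k + 1) ∧ s + h = -k)) := by
  rw [energyLevel_sub_energyLevel, energyLevel_sub_energyLevel] at heq
  obtain ⟨hm, hn⟩ : ((j'' : ℤ) * (j'' + 1) - j' * (j' + 1) = 0) ∧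
      ((s + h) ^ 2 - s ^ 2 = 2 * k + 1 ∨ (s + h) ^ 2 - s ^ 2 = -(2 * k + 1)) := by
    rcases (irrational_energyLevel_coeff_ratio hirr).intCast_eq_of_abs_mul_add_mul_eq
      heq.symm with ⟨hm, hn⟩ | ⟨hm, hn⟩
    · exact ⟨by linarith, Or.inl (by linarith)⟩
    · exact ⟨by linarith, Or.inr (by linarith)⟩
  have hj' : j' = j'' := Nat.eq_of_intCast_mul_add_one_eq (sub_eq_zero.mp hm).symm
  exact ⟨hj', by omega, Int.sq_add_sub_sq_eq_pm_odd_cases hh hn⟩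

/-- `η`-resonances: if `I₂/I₃ ∉ ℚ`, an identity
`|E(j,k+1) − E(j,k)| = |E(j'',s+h) − E(j',s)|` with `j ≤ j' ≤ j'' ≤ j+1`,
`−j' ≤ s ≤ j'`, `h ∈ {−1,0,1}` forces `j' = j''` (both equal to `j` or to `j+1`) and the
transition to couple the levels `±k` and `±(k+1)`. -/
theorem eta_resonances
    (I₂ I₃ : ℝ) (hI₂ : 0 < I₂) (hI₃ : 0 < I₃) (hirr : Irrational (I₂ / I₃))
    (j j' j'' : ℕ) (k s h : ℤ)
    (hk : -(j : ℤ) ≤ k ∧ k ≤ (j : ℤ))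
    (hj : j ≤ j' ∧ j' ≤ j'' ∧ j'' ≤ j + 1)
    (hs : -(j' : ℤ) ≤ s ∧ s ≤ (j' : ℤ)) (hh : h = -1 ∨ h = 0 ∨ h = 1)
    (heq : |energyLevel I₂ I₃ j (k + 1) - energyLevel I₂ I₃ j k| =
      |energyLevel I₂ I₃ j'' (s + h) - energyLevel I₂ I₃ j' s|) :
    j' = j'' ∧ (j' = j ∨ j' = j + 1) ∧
      ((s = k ∧ s + h = k + 1) ∨ (s = -k ∧ s + h = -(k + 1)) ∨
       (s = k + 1 ∧ s + h = k) ∨ (s = -(k + 1) ∧ s + h = -k)) :=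
  eta_resonances_general I₂ I₃ hirr j j' j'' k s h hj hh heq
end
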